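/- arXiv:1407.5166 — 3 statements merged into one kernel-verified Lean document; each statement's English description precedes it below -/
import Mathlib

section
/- If Z is a bisimulation between two parity game arenas G and G' (i.e., Z respects colours, and satisfies the Zig and Zag conditions for moves), and (v, v') ∈ Z, then Eve has a winning strategy in the parity game (G, v) if and only if Eve has a winning strategy in the parity game (G', v'). -/
/-- A parity game arena: positions partitioned between Eve (`eve`) and Adam,
a total move relation `E`, and a colouring `C`. -/
structure Arena (V : Type*) where
  eve : V → Prop
  E : V → V → Prop
  total : ∀ v, ∃ u, E v u
  C : V → ℕ

/-- An infinite play from `v0`. -/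
def IsPlay {V : Type*} (G : Arena V) (v0 : V) (π : ℕ → V) : Prop :=
  π 0 = v0 ∧ ∀ i, G.E (π i) (π (i + 1))

/-- A strategy (for Eve) maps finite plays ending in an Eve position to a successor. -/
def LegalStrat {V : Type*} (G : Arena V) (σ : List V → V) : Prop :=
  ∀ (ρ : List V) (v : V), G.eve v → G.E v (σ (ρ ++ [v]))

/-- The play `π` is consistent with Eve's strategy `σ`. -/
def Follows {V : Type*} (G : Arena V) (σ : List V → V) (π : ℕ → V) : Prop :=
  ∀ i, G.eve (π i) → π (i + 1) = σ (List.ofFn fun j : Fin (i + 1) => π j)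

/-- Colour `c` occurs infinitely often along `π`. -/
def InfOften {V : Type*} (G : Arena V) (π : ℕ → V) (c : ℕ) : Prop :=
  {i | G.C (π i) = c}.Infinite

/-- Eve wins a play if the least colour occurring infinitely often is even. -/
def EveWins {V : Type*} (G : Arena V) (π : ℕ → V) : Prop :=
  ∃ c, InfOften G π c ∧ Even c ∧ ∀ c', InfOften G π c' → c ≤ c'

/-- Eve has a winning strategy in the parity game `(G, v0)`. -/
def WinsFrom {V : Type*} (G : Arena V) (v0 : V) : Prop :=
  ∃ σ : List V → V, LegalStrat G σ ∧
    ∀ π : ℕ → V, IsPlay G v0 π → Follows G σ π → EveWins G π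

/-- A bisimulation between two parity game arenas. -/
structure IsBisim {V V' : Type*} (G : Arena V) (G' : Arena V') (Z : V → V' → Prop) : Prop where
  colour : ∀ v v', Z v v' → G.C v = G'.C v'
  player : ∀ v v', Z v v' → (G.eve v ↔ G'.eve v')
  zig : ∀ v v' u, Z v v' → G.E v u → ∃ u', G'.E v' u' ∧ Z u u'
  zag : ∀ v v' u', Z v v' → G'.E v' u' → ∃ u, G.E v u ∧ Z u u'

/-!
Eve's winning strategy `σ` in `G` is transferred to `G'` by letting her play a shadow game in
`G` alongside the real one in `G'`. The shadow play starts at `v` and stays `Z`-related to the real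
play: at Eve's shadow positions it follows `σ`, and Eve copies that move into `G'` by Zig; at Adam's
positions his real move in `G'` is mirrored in the shadow game by Zag. As the shadow play is
consistent with `σ`, it is won by Eve, and `Z`-related plays carry the same colours. Symmetry of
bisimulation gives the converse.
-/

namespace Arena

variable {V : Type*} (G : Arena V)

open Classical in
noncomputable def succWith (x : V) (P : V → Prop) : V :=
  if h : ∃ u, G.E x u ∧ P u then h.choose else (G.total x).choose

theorem E_succWith (x : V) (P : V → Prop) : G.E x (G.succWith x P) := by
  unfold succWith
  split_ifs with h
  exacts [h.choose_spec.1, (G.total x).choose_spec]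

theorem succWith_spec {x : V} {P : V → Prop} (h : ∃ u, G.E x u ∧ P u) :
    P (G.succWith x P) := by
  rw [succWith, dif_pos h]
  exact h.choose_spec.2

end Arena

theorem IsBisim.symm {V V' : Type*} {G : Arena V} {G' : Arena V'} {Z : V → V' → Prop}
    (hZ : IsBisim G G' Z) : IsBisim G' G (flip Z) where
  colour v' v h := (hZ.colour v v' h).symm
  player v' v h := (hZ.player v v' h).symm
  zig v' v u' h he := hZ.zag v v' u' h he
  zag v' v u h he := hZ.zig v v' u h he

theorem infOften_iff_of_colour_eq {V V' : Type*} {G : Arena V} {G' : Arena V'} {π : ℕ → V}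
    {π' : ℕ → V'} (h : ∀ i, G.C (π i) = G'.C (π' i)) (c : ℕ) :
    InfOften G π c ↔ InfOften G' π' c := by
  simp only [InfOften, h]

theorem EveWins.of_colour_eq {V V' : Type*} {G : Arena V} {G' : Arena V'} {π : ℕ → V}
    {π' : ℕ → V'} (h : ∀ i, G.C (π i) = G'.C (π' i)) (hπ : EveWins G π) : EveWins G' π' := by
  simp only [EveWins, ← infOften_iff_of_colour_eq h]
  exact hπ

theorem List.getLastD_ofFn_succ {α : Type*} (f : ℕ → α) (n : ℕ) (d : α) :
    (List.ofFn fun j : Fin (n + 1) => f j).getLastD d = f n := by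
  rw [List.ofFn_succ_last, List.getLastD_concat]
  rfl

theorem List.getD_ofFn_of_le {α : Type*} (f : ℕ → α) {n j : ℕ} (hj : j ≤ n) (d : α) :
    (List.ofFn fun j : Fin (n + 1) => f j).getD j d = f j := by
  rw [List.getD_eq_getElem?_getD, List.getElem?_ofFn]
  simp [Nat.lt_succ_of_le hj]

section Shadow

variable {V V' : Type*} (G : Arena V) (G' : Arena V') (Z : V → V' → Prop) (σ : List V → V)
  (v : V) (v' : V')

open Classical in
/-- The first `n + 1` positions of the shadow in `G`, from `v`, of the play `π'` in `G'`. -/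
noncomputable def shadowHistory (π' : ℕ → V') : ℕ → List V
  | 0 => [v]
  | n + 1 =>
    let h := shadowHistory π' n
    let w := h.getLastD v
    h ++ [if G.eve w then σ h else G.succWith w (Z · (π' (n + 1)))]

noncomputable def shadow (π' : ℕ → V') (n : ℕ) : V :=
  (shadowHistory G Z σ v π' n).getLastD v

/-- Move to a `Z`-partner of `σ`'s move in the shadow of the history `ρ'`, read as a sequence
padded with `v'`. -/
noncomputable def transferStrat (ρ' : List V') : V' :=
  G'.succWith (ρ'.getLastD v')
    (Z (σ (shadowHistory G Z σ v (ρ'.getD · v') (ρ'.length - 1))))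

variable {G G' Z σ v v'}

theorem shadow_zero (π' : ℕ → V') : shadow G Z σ v π' 0 = v := rfl

theorem shadowHistory_succ (π' : ℕ → V') (n : ℕ) :
    shadowHistory G Z σ v π' (n + 1) =
      shadowHistory G Z σ v π' n ++ [shadow G Z σ v π' (n + 1)] := by
  rw [shadow, shadowHistory, List.getLastD_concat]

open Classical in
theorem shadow_succ (π' : ℕ → V') (n : ℕ) :
    shadow G Z σ v π' (n + 1) =
      if G.eve (shadow G Z σ v π' n) then σ (shadowHistory G Z σ v π' n)
      else G.succWith (shadow G Z σ v π' n) (Z · (π' (n + 1))) :=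
  List.getLastD_concat

theorem shadowHistory_eq_ofFn (π' : ℕ → V') (n : ℕ) :
    shadowHistory G Z σ v π' n = List.ofFn fun j : Fin (n + 1) => shadow G Z σ v π' j := by
  induction n with
  | zero => rfl
  | succ n ih =>
    rw [List.ofFn_succ_last, shadowHistory_succ, ih]
    rfl

theorem shadowHistory_congr {π₁ π₂ : ℕ → V'} {n : ℕ} (h : ∀ j ≤ n, π₁ j = π₂ j) :
    shadowHistory G Z σ v π₁ n = shadowHistory G Z σ v π₂ n := by
  induction n with
  | zero => rfl
  | succ n ih =>
    simp only [shadowHistory]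
    rw [ih fun j hj => h j (by omega), h (n + 1) le_rfl]

theorem legalStrat_transferStrat : LegalStrat G' (transferStrat G G' Z σ v v') := by
  intro ρ' w' _
  rw [transferStrat, List.getLastD_concat]
  exact G'.E_succWith _ _

theorem transferStrat_ofFn (π' : ℕ → V') (n : ℕ) :
    transferStrat G G' Z σ v v' (List.ofFn fun j : Fin (n + 1) => π' j) =
      G'.succWith (π' n) (Z (σ (shadowHistory G Z σ v π' n))) := by
  have hist : shadowHistory G Z σ v ((List.ofFn fun j : Fin (n + 1) => π' j).getD · v') n =
      shadowHistory G Z σ v π' n :=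
    shadowHistory_congr fun j hj => List.getD_ofFn_of_le π' hj v'
  rw [transferStrat, List.getLastD_ofFn_succ, List.length_ofFn, Nat.add_sub_cancel, hist]

/-- One round of the simulation: Zig for Eve's moves, Zag for Adam's. -/
theorem shadow_step (hZ : IsBisim G G' Z) (hσ : LegalStrat G σ) {π' : ℕ → V'}
    (hπ' : ∀ i, G'.E (π' i) (π' (i + 1))) (hfol : Follows G' (transferStrat G G' Z σ v v') π')
    {n : ℕ} (hn : Z (shadow G Z σ v π' n) (π' n)) :
    G.E (shadow G Z σ v π' n) (shadow G Z σ v π' (n + 1)) ∧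
      Z (shadow G Z σ v π' (n + 1)) (π' (n + 1)) := by
  set w := shadow G Z σ v π' n
  rw [shadow_succ]
  by_cases hw : G.eve w
  · rw [if_pos hw]
    have hmove : G.E w (σ (shadowHistory G Z σ v π' n)) := by
      rw [shadowHistory_eq_ofFn, List.ofFn_succ_last]
      exact hσ _ w hw
    refine ⟨hmove, ?_⟩
    rw [hfol n ((hZ.player w (π' n) hn).1 hw), transferStrat_ofFn]
    exact G'.succWith_spec (hZ.zig _ _ _ hn hmove)
  · rw [if_neg hw]
    exact ⟨G.E_succWith _ _, G.succWith_spec (hZ.zag _ _ _ hn (hπ' n))⟩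

theorem shadow_related (hZ : IsBisim G G' Z) (hσ : LegalStrat G σ) {π' : ℕ → V'}
    (hπ' : IsPlay G' v' π') (hfol : Follows G' (transferStrat G G' Z σ v v') π')
    (hvv' : Z v v') (n : ℕ) : Z (shadow G Z σ v π' n) (π' n) := by
  induction n with
  | zero => rw [shadow_zero, hπ'.1]; exact hvv'
  | succ n ih => exact (shadow_step hZ hσ hπ'.2 hfol ih).2

theorem isPlay_shadow (hZ : IsBisim G G' Z) (hσ : LegalStrat G σ) {π' : ℕ → V'}
    (hπ' : IsPlay G' v' π') (hfol : Follows G' (transferStrat G G' Z σ v v') π')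
    (hvv' : Z v v') : IsPlay G v (shadow G Z σ v π') :=
  ⟨shadow_zero π', fun n =>
    (shadow_step hZ hσ hπ'.2 hfol (shadow_related hZ hσ hπ' hfol hvv' n)).1⟩

theorem follows_shadow (π' : ℕ → V') : Follows G σ (shadow G Z σ v π') := by
  intro n hn
  rw [shadow_succ, if_pos hn, shadowHistory_eq_ofFn]

theorem winsFrom_of_isBisim (hZ : IsBisim G G' Z) (hvv' : Z v v') (h : WinsFrom G v) :
    WinsFrom G' v' := by
  obtain ⟨σ, hσ, hwin⟩ := h
  refine ⟨transferStrat G G' Z σ v v', legalStrat_transferStrat, fun π' hπ' hfol => ?_⟩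
  have hrel := shadow_related hZ hσ hπ' hfol hvv'
  exact (hwin _ (isPlay_shadow hZ hσ hπ' hfol hvv') (follows_shadow π')).of_colour_eq
    fun n => hZ.colour _ _ (hrel n)

end Shadow

/-- If `Z` is a bisimulation between `G` and `G'` and `(v, v') ∈ Z`, then Eve has a
winning strategy in `(G, v)` iff she has one in `(G', v')`. -/
theorem bisim_preserves_winning {V V' : Type*} (G : Arena V) (G' : Arena V')
    (Z : V → V' → Prop) (hZ : IsBisim G G' Z) (v : V) (v' : V') (hvv' : Z v v') :
    WinsFrom G v ↔ WinsFrom G' v' :=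
  ⟨winsFrom_of_isBisim hZ hvv', winsFrom_of_isBisim (G := G') hZ.symm hvv'⟩
end

section
/- Combining winning strategies via bisimilar exit positions yields a winning strategy: let (G, v₀) be a parity game, and suppose there is a set S of positions closed in the following sense: every play from v₀ either stays in S forever or has a first exit position outside S. If Eve has a strategy σ such that (a) every outcome of σ that remains in S forever is winning, and (b) every first-exit position of an outcome of σ is a winning position for Eve, then Eve has a winning strategy from v₀. -/
/-!
Eve plays `σ` until the play first leaves `S`, at some position `v`, and from then on plays a
winning strategy from `v` on the part of the history that starts at `v`. A play that never leaves
`S` is then an outcome of `σ`. A play that first leaves `S` at time `k` agrees up to time `k` with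
an outcome of `σ` (continue its prefix by `σ` against arbitrary moves of Adam), so `v` is winning
by hypothesis, and the play from time `k` on is won by the strategy chosen at `v`. The parity
condition is prefix-independent, so the whole play is won.
-/

theorem List.dropWhile_append_singleton {α : Type*} (p : α → Bool) (l : List α) (a : α) :
    (l ++ [a]).dropWhile p = [] ∨ ∃ l', (l ++ [a]).dropWhile p = l' ++ [a] := by
  rw [List.dropWhile_append]
  split
  · by_cases ha : p a <;> simp [ha]
  · exact Or.inr ⟨_, rfl⟩

section Shift

variable {V : Type*} {G : Arena V}

theorem infOften_shift_iff (π : ℕ → V) (k c : ℕ) :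
    InfOften G (fun j => π (k + j)) c ↔ InfOften G π c := by
  simp only [InfOften, ← Nat.frequently_atTop_iff_infinite]
  conv_rhs => rw [← Filter.map_add_atTop_eq_nat k]
  simp only [Filter.frequently_map, add_comm]

theorem EveWins.of_shift {π : ℕ → V} (k : ℕ) (h : EveWins G fun j => π (k + j)) :
    EveWins G π := by
  obtain ⟨c, hc, heven, hmin⟩ := h
  exact ⟨c, (infOften_shift_iff π k c).1 hc, heven,
    fun c' hc' => hmin c' ((infOften_shift_iff π k c').2 hc')⟩

end Shift

namespace Arena

open Classical

variable {V : Type*} {G : Arena V}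

noncomputable def winningStratOr (G : Arena V) (v : V) (σ : List V → V) : List V → V :=
  if h : WinsFrom G v then h.choose else σ

theorem legalStrat_winningStratOr {σ : List V → V} (hσ : LegalStrat G σ) (v : V) :
    LegalStrat G (winningStratOr G v σ) := by
  unfold winningStratOr
  split_ifs with h
  exacts [h.choose_spec.1, hσ]

theorem _root_.WinsFrom.winningStratOr_wins {v : V} (h : WinsFrom G v) (σ : List V → V)
    {π : ℕ → V} (hπ : IsPlay G v π) (hfol : Follows G (winningStratOr G v σ) π) : EveWins G π := by
  rw [winningStratOr, dif_pos h] at hfol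
  exact h.choose_spec.2 π hπ hfol

/-- `ρ.dropWhile (· ∈ S)` is the part of the history `ρ` from its first exit from `S` on. -/
noncomputable def combineAtExits (G : Arena V) (S : Set V) (σ : List V → V) (ρ : List V) : V :=
  match ρ.dropWhile (· ∈ S) with
  | [] => σ ρ
  | v :: ρ' => winningStratOr G v σ (v :: ρ')

variable {S : Set V} {σ : List V → V}

theorem combineAtExits_of_forall_mem {ρ : List V} (h : ∀ v ∈ ρ, v ∈ S) :
    combineAtExits G S σ ρ = σ ρ := by
  have hnil : ρ.dropWhile (· ∈ S) = [] := List.dropWhile_eq_nil_iff.2 (by simpa using h)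
  rw [combineAtExits, hnil]

theorem combineAtExits_append_cons {ρ₁ ρ₂ : List V} {v : V} (h : ∀ w ∈ ρ₁, w ∈ S)
    (hv : v ∉ S) :
    combineAtExits G S σ (ρ₁ ++ v :: ρ₂) = winningStratOr G v σ (v :: ρ₂) := by
  have hdrop : (ρ₁ ++ v :: ρ₂).dropWhile (· ∈ S) = v :: ρ₂ := by
    rw [List.dropWhile_append_of_pos (by simpa using h),
      List.dropWhile_cons_of_neg (by simpa using hv)]
  rw [combineAtExits, hdrop]

theorem legalStrat_combineAtExits (hσ : LegalStrat G σ) :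
    LegalStrat G (combineAtExits G S σ) := by
  intro ρ v hv
  unfold combineAtExits
  split
  · exact hσ ρ v hv
  · next w ρ' hdrop =>
    obtain hnil | ⟨ρ'', hsuffix⟩ := List.dropWhile_append_singleton (· ∈ S) ρ v
    · simp [hnil] at hdrop
    · rw [← hdrop, hsuffix]
      exact legalStrat_winningStratOr hσ w ρ'' v hv

theorem follows_of_follows_combineAtExits {π : ℕ → V}
    (hfol : Follows G (combineAtExits G S σ) π) {i : ℕ} (hS : ∀ j ≤ i, π j ∈ S) (he : G.eve (π i)) :
    π (i + 1) = σ (List.ofFn fun j : Fin (i + 1) => π j) := by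
  rw [hfol i he, combineAtExits_of_forall_mem]
  simp only [List.forall_mem_ofFn_iff]
  exact fun j => hS j (Nat.lt_succ_iff.1 j.isLt)

theorem follows_shift_of_follows_combineAtExits {π : ℕ → V}
    (hfol : Follows G (combineAtExits G S σ) π) {k : ℕ} (hk : π k ∉ S) (hS : ∀ j < k, π j ∈ S) :
    Follows G (winningStratOr G (π k) σ) fun j => π (k + j) := by
  intro i he
  have hsplit : (List.ofFn fun j : Fin (k + (i + 1)) => π j) =
      (List.ofFn fun j : Fin k => π j) ++ π k :: List.ofFn fun j : Fin i => π (k + (j + 1)) := by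
    rw [List.ofFn_add, List.ofFn_succ]
    simp
  change π (k + i + 1) = _
  rw [hfol (k + i) he]
  change combineAtExits G S σ (List.ofFn fun j : Fin (k + (i + 1)) => π j) = _
  rw [hsplit, combineAtExits_append_cons (List.forall_mem_ofFn_iff.2 fun j => hS j j.isLt) hk]
  simp [List.ofFn_succ]

noncomputable def nextPos (G : Arena V) (σ : List V → V) (ρ : List V) (v : V) : V :=
  if G.eve v then σ (ρ ++ [v]) else Classical.choose (G.total v)

theorem E_nextPos (hσ : LegalStrat G σ) (ρ : List V) (v : V) : G.E v (nextPos G σ ρ v) := by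
  unfold nextPos
  split_ifs with he
  exacts [hσ ρ v he, Classical.choose_spec (G.total v)]

noncomputable def followAfter (G : Arena V) (σ : List V → V) (π : ℕ → V) (k : ℕ) : ℕ → V
  | 0 => π 0
  | n + 1 =>
    if n < k then π (n + 1)
    else nextPos G σ (List.ofFn fun j : Fin n => followAfter G σ π k j) (followAfter G σ π k n)

theorem followAfter_of_le {π : ℕ → V} {k n : ℕ} (h : n ≤ k) : followAfter G σ π k n = π n := by
  cases n with
  | zero => rw [followAfter]
  | succ n => rw [followAfter, if_pos (by omega)]

theorem followAfter_succ_of_le {π : ℕ → V} {k n : ℕ} (h : k ≤ n) :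
    followAfter G σ π k (n + 1) =
      nextPos G σ (List.ofFn fun j : Fin n => followAfter G σ π k j) (followAfter G σ π k n) := by
  rw [followAfter, if_neg (by omega)]

theorem isPlay_followAfter (hσ : LegalStrat G σ) {v0 : V} {π : ℕ → V} (hπ : IsPlay G v0 π)
    (k : ℕ) :
    IsPlay G v0 (followAfter G σ π k) := by
  refine ⟨(followAfter_of_le k.zero_le).trans hπ.1, fun n => ?_⟩
  rcases lt_or_ge n k with hn | hn
  · rw [followAfter_of_le hn.le, followAfter_of_le hn]
    exact hπ.2 n
  · rw [followAfter_succ_of_le hn]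
    exact E_nextPos hσ _ _

theorem follows_followAfter {π : ℕ → V} {k : ℕ}
    (hpre : ∀ i < k, G.eve (π i) → π (i + 1) = σ (List.ofFn fun j : Fin (i + 1) => π j)) :
    Follows G σ (followAfter G σ π k) := by
  intro n he
  rcases lt_or_ge n k with hn | hn
  · have hprefix : (List.ofFn fun j : Fin (n + 1) => followAfter G σ π k j) =
        List.ofFn fun j : Fin (n + 1) => π j :=
      congrArg List.ofFn (funext fun j => followAfter_of_le (by omega))
    rw [followAfter_of_le hn.le] at he
    rw [followAfter_of_le hn, hprefix, hpre n hn he]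
  · rw [followAfter_succ_of_le hn, nextPos, if_pos he, List.ofFn_succ_last]
    simp

end Arena

theorem combine_strategies_at_exits_general {V : Type*} (G : Arena V) (v0 : V) (S : Set V)
    (σ : List V → V) (hleg : LegalStrat G σ)
    (hstay : ∀ π : ℕ → V, IsPlay G v0 π → Follows G σ π → (∀ i, π i ∈ S) → EveWins G π)
    (hexit : ∀ (π : ℕ → V) (k : ℕ), IsPlay G v0 π → Follows G σ π →
      π k ∉ S → (∀ j < k, π j ∈ S) → WinsFrom G (π k)) :
    WinsFrom G v0 := by
  classical
  refine ⟨G.combineAtExits S σ, Arena.legalStrat_combineAtExits hleg, fun π hπ hfol => ?_⟩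
  by_cases hin : ∀ i, π i ∈ S
  · exact hstay π hπ
      (fun i he => Arena.follows_of_follows_combineAtExits hfol (fun j _ => hin j) he) hin
  rw [not_forall] at hin
  set k := Nat.find hin
  have hk : π k ∉ S := Nat.find_spec hin
  have hS : ∀ j < k, π j ∈ S := fun j hj => not_not.1 (Nat.find_min hin hj)
  have hagree : ∀ j ≤ k, G.followAfter σ π k j = π j := fun j => Arena.followAfter_of_le
  have hwin : WinsFrom G (π k) := by
    rw [← hagree k le_rfl]
    exact hexit _ k (Arena.isPlay_followAfter hleg hπ k)
      (Arena.follows_followAfter fun i hi he =>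
        Arena.follows_of_follows_combineAtExits hfol (fun j hj => hS j (by omega)) he)
      (by rwa [hagree k le_rfl]) (fun j hj => by rw [hagree j hj.le]; exact hS j hj)
  exact .of_shift k (hwin.winningStratOr_wins σ ⟨rfl, fun i => hπ.2 (k + i)⟩
    (Arena.follows_shift_of_follows_combineAtExits hfol hk hS))

/-- Combining winning strategies at exit positions: suppose every play from `v0`
either stays in `S` forever or has a first exit position outside `S`, and Eve has
a strategy `σ` such that (a) every outcome of `σ` staying in `S` forever is winning,
and (b) every first-exit position of an outcome of `σ` is a winning position for
Eve. Then Eve has a winning strategy from `v0`. -/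
theorem combine_strategies_at_exits {V : Type*} (G : Arena V) (v0 : V) (S : Set V)
    (hclosed : ∀ π : ℕ → V, IsPlay G v0 π →
      (∀ i, π i ∈ S) ∨ ∃ k, π k ∉ S ∧ ∀ j < k, π j ∈ S)
    (σ : List V → V) (hleg : LegalStrat G σ)
    (hstay : ∀ π : ℕ → V, IsPlay G v0 π → Follows G σ π → (∀ i, π i ∈ S) → EveWins G π)
    (hexit : ∀ (π : ℕ → V) (k : ℕ), IsPlay G v0 π → Follows G σ π →
      π k ∉ S → (∀ j < k, π j ∈ S) → WinsFrom G (π k)) :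
    WinsFrom G v0 :=
  combine_strategies_at_exits_general G v0 S σ hleg hstay hexit
end

section
/- In the combined tree-arena 𝒯₀ of Section 4, the blindfold agent has no uniform strategy ensuring F p, but has a non-uniform strategy ensuring F p. Concretely: there is no single infinite word s ∈ {a₀,a₁}^ω such that for every k ∈ {1,…,2^N+2}, the path from x_k determined by s visits a p-labelled node; but for each k there exists a word s_k ∈ {a₀,a₁}^ω whose path from x_k visits a p-labelled node. -/
/-- In the combined tree-arena `𝒯₀`, the unique `p`-word below `y_k` (here `k`
ranges over `0, …, 2^N + 1`, 0-indexed): it is `w k` for `k < 2^N`, the word `w j`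
below `y_{2^N+1}` and the word `w i` below `y_{2^N+2}`. -/
def TargetWord {N : ℕ} (w : Fin (2 ^ N) → (Fin N → Bool)) (i j : Fin (2 ^ N))
    (k : ℕ) : Fin N → Bool :=
  if h : k < 2 ^ N then w ⟨k, h⟩ else if k = 2 ^ N then w j else w i

/-- The path from `x_k` determined by the infinite action word `s` visits a
`p`-labelled node: either `x_k` itself is labelled `p` (`k < 2^N`), or the binary
word determined by the actions `s 1, …, s N` is the unique `p`-word below `y_k`. -/
def VisitsP {N : ℕ} (w : Fin (2 ^ N) → (Fin N → Bool)) (i j : Fin (2 ^ N))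
    (k : ℕ) (s : ℕ → Bool) : Prop :=
  k < 2 ^ N ∨ (fun m : Fin N => s (m.val + 1)) = TargetWord w i j k

/-- In `𝒯₀`, the blindfold agent has no uniform strategy ensuring `F p`: no single
infinite action word `s` makes the path from every `x_k` (`k < 2^N + 2`) visit a
`p`-labelled node; but she has a non-uniform strategy: for each `k` some action
word works. -/
theorem no_uniform_strategy_but_nonuniform {N : ℕ}
    (w : Fin (2 ^ N) → (Fin N → Bool)) (hinj : Function.Injective w)
    (i j : Fin (2 ^ N)) (hij : i ≠ j) :
    (¬ ∃ s : ℕ → Bool, ∀ k < 2 ^ N + 2, VisitsP w i j k s) ∧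
    (∀ k < 2 ^ N + 2, ∃ s : ℕ → Bool, VisitsP w i j k s) := by
  constructor
  · rintro ⟨s, hs⟩
    have h1 := hs (2 ^ N) (by omega)
    have h2 := hs (2 ^ N + 1) (by omega)
    rcases h1 with h1 | h1
    · omega
    rcases h2 with h2 | h2
    · omega
    have e1 : TargetWord w i j (2 ^ N) = w j := by
      simp [TargetWord]
    have e2 : TargetWord w i j (2 ^ N + 1) = w i := by
      simp [TargetWord]
    rw [e1] at h1; rw [e2] at h2
    exact hij (hinj (h2.symm.trans h1))
  · intro k _
    refine ⟨fun n => if h : n - 1 < N then TargetWord w i j k ⟨n - 1, h⟩ else false, Or.inr ?_⟩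
    funext m
    simp [m.isLt]
end
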